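/- arXiv:1602.01986 — 5 statements merged into one kernel-verified Lean document; each statement's English description precedes it below -/
import Mathlib

section
/- Let Ω be a metric space, and let f₁, …, f_r, φ, g, g₁, …, g_r be continuous real-valued functions on Ω with fᵢ = g·gᵢ for each i. Assume the common zero set Z(f₁, …, f_r) is nowhere dense in Ω and that φ satisfies the pointwise test for f₁, …, f_r. Then there exists a unique continuous function ψ : Ω → ℝ such that φ = g·ψ. -/
/-!
The pointwise test at `p` gives `φ = g * qₚ` on all of `Ω`, where `qₚ = ∑ ψᵢ⁽ᵖ⁾ gᵢ` is continuous
at `p`. Since `Z(g) ⊆ Z(f₁, …, f_r)` is nowhere dense, `g ≠ 0` on a dense set `U`, and there all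
the `qₚ` agree with `φ / g`. So `ψ x := qₓ x` tends to `ψ p` as `x → p` inside `U`, and a function
into a regular space with this property for every `p` is continuous. Uniqueness holds because two
continuous quotients agree on the dense set `U`.
-/

open Filter Topology

lemma IsNowhereDense.dense_compl {X : Type*} [TopologicalSpace X] {s : Set X}
    (hs : IsNowhereDense s) : Dense sᶜ :=
  interior_eq_empty_iff_dense_compl.mp <|
    Set.eq_empty_of_subset_empty <| hs ▸ interior_mono subset_closure

lemma dense_setOf_ne_zero {X M : Type*} [TopologicalSpace X] [Zero M] {g : X → M} {s : Set X}
    (hs : IsNowhereDense s) (hgs : {x | g x = 0} ⊆ s) : Dense {x | g x ≠ 0} :=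
  (hs.mono hgs).dense_compl

section Quotient

variable {X M : Type*} [TopologicalSpace X] [TopologicalSpace M] [T3Space M]

lemma continuous_of_tendsto_nhdsWithin_dense {U : Set X} (hU : Dense U) {f : X → M}
    (hf : ∀ x, Tendsto f (𝓝[U] x) (𝓝 (f x))) : Continuous f := by
  have hext : extendFrom U f = f := funext fun x ↦ extendFrom_eq (hU x) (hf x)
  exact hext ▸ continuous_extendFrom hU fun x ↦ ⟨f x, hf x⟩

variable [Mul M] [Zero M] [IsLeftCancelMulZero M]

theorem existsUnique_continuous_mul_eq_of_forall_continuousAt {φ g : X → M}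
    (hg : Dense {x | g x ≠ 0}) (q : X → X → M) (hq : ∀ p, ContinuousAt (q p) p)
    (hφ : ∀ p x, φ x = g x * q p x) : ∃! ψ : X → M, Continuous ψ ∧ ∀ x, φ x = g x * ψ x := by
  have hagree : ∀ p, ∀ x ∈ {x | g x ≠ 0}, q x x = q p x := fun p x hx ↦
    mul_left_cancel₀ hx <| (hφ x x).symm.trans (hφ p x)
  have hlim : ∀ p, Tendsto (fun x ↦ q x x) (𝓝[{x | g x ≠ 0}] p) (𝓝 (q p p)) := fun p ↦
    (hq p).tendsto.mono_left nhdsWithin_le_nhds |>.congr' <|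
      eventually_nhdsWithin_of_forall fun x hx ↦ (hagree p x hx).symm
  refine ⟨fun x ↦ q x x, ⟨continuous_of_tendsto_nhdsWithin_dense hg hlim, fun x ↦ hφ x x⟩, ?_⟩
  rintro ψ ⟨hψ, hφψ⟩
  exact hψ.ext_on hg (continuous_of_tendsto_nhdsWithin_dense hg hlim) fun x hx ↦
    mul_left_cancel₀ hx <| (hφψ x).symm.trans (hφ x x)

end Quotient

theorem exists_unique_continuous_quotient_general
    {Ω : Type*} [MetricSpace Ω] (r : ℕ) (f g' : Fin r → Ω → ℝ) (φ g : Ω → ℝ)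
    (hg' : ∀ i, Continuous (g' i))
    (hfac : ∀ i x, f i x = g x * g' i x)
    (hZ : IsNowhereDense {x | ∀ i, f i x = 0})
    (hPT : ∀ p : Ω, ∃ ψ : Fin r → Ω → ℝ, (∀ i, ContinuousAt (ψ i) p) ∧
      ∀ x, φ x = ∑ i, ψ i x * f i x) :
    ∃! ψ : Ω → ℝ, Continuous ψ ∧ ∀ x, φ x = g x * ψ x := by
  choose Ψ hΨ hφΨ using hPT
  have hg : Dense {x | g x ≠ 0} :=
    dense_setOf_ne_zero hZ fun x hx i ↦ by simp [hfac, hx.out]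
  refine existsUnique_continuous_mul_eq_of_forall_continuousAt hg
    (fun p x ↦ ∑ i, Ψ p i x * g' i x)
    (fun p ↦ tendsto_finsetSum _ fun i _ ↦ (hΨ p i).mul (hg' i).continuousAt) fun p x ↦ ?_
  simp only [hφΨ p x, hfac, Finset.mul_sum]
  exact Finset.sum_congr rfl fun i _ ↦ by ring

theorem exists_unique_continuous_quotient
    {Ω : Type*} [MetricSpace Ω] (r : ℕ) (f g' : Fin r → Ω → ℝ) (φ g : Ω → ℝ)
    (hf : ∀ i, Continuous (f i)) (hφ : Continuous φ) (hg : Continuous g)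
    (hg' : ∀ i, Continuous (g' i))
    (hfac : ∀ i x, f i x = g x * g' i x)
    (hZ : IsNowhereDense {x | ∀ i, f i x = 0})
    (hPT : ∀ p : Ω, ∃ ψ : Fin r → Ω → ℝ, (∀ i, ContinuousAt (ψ i) p) ∧
      ∀ x, φ x = ∑ i, ψ i x * f i x) :
    ∃! ψ : Ω → ℝ, Continuous ψ ∧ ∀ x, φ x = g x * ψ x :=
  exists_unique_continuous_quotient_general r f g' φ g hg' hfac hZ hPT
end

section
/- Define φ₁, φ₂ : ℝ² → ℝ by φ₁(x,y) = x⁵y²/(x⁶ + y⁶), φ₂(x,y) = x²y⁵/(x⁶ + y⁶) for (x,y) ≠ (0,0) and φ₁(0,0) = φ₂(0,0) = 0. Then φ₁ and φ₂ are continuous on ℝ² and satisfy x²y² = φ₁(x,y)·x³ + φ₂(x,y)·y³ for all (x,y) ∈ ℝ². -/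
/-! Away from the origin the identity is just clearing the denominator `x⁶ + y⁶`. Continuity at
the origin comes from the AM-GM bound `x⁴y² ≤ x⁶ + y⁶`, which gives `|φ₁(x,y)| ≤ |x|` and
`|φ₂(x,y)| ≤ |y|`. -/

lemma add_sixth_pow_pos {p : ℝ × ℝ} (hp : p ≠ 0) : 0 < p.1 ^ 6 + p.2 ^ 6 := by
  rcases p with ⟨a, b⟩
  rcases not_and_or.1 (by simpa using hp) with h | h <;> positivity

lemma pow_four_mul_sq_le_add_sixth_pow (a b : ℝ) : a ^ 4 * b ^ 2 ≤ a ^ 6 + b ^ 6 := by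
  nlinarith [sq_nonneg (a ^ 2 - b ^ 2), sq_nonneg (a * b), sq_nonneg (a ^ 3),
    mul_nonneg (sq_nonneg (a ^ 2 - b ^ 2)) (add_nonneg (sq_nonneg (a ^ 2)) (sq_nonneg (a * b)))]

lemma abs_pow_five_mul_sq_le (a b : ℝ) : |a ^ 5 * b ^ 2| ≤ |a| * (a ^ 6 + b ^ 6) := by
  calc |a ^ 5 * b ^ 2| = |a| * (a ^ 4 * b ^ 2) := by
        rw [abs_mul, abs_pow, abs_of_nonneg (by positivity : 0 ≤ b ^ 2), show (5 : ℕ) = 1 + 4 from rfl, pow_add, pow_one, (by decide : Even 4).pow_abs]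
        ring
    _ ≤ |a| * (a ^ 6 + b ^ 6) := by
        gcongr
        exact pow_four_mul_sq_le_add_sixth_pow a b

theorem continuous_div_of_abs_le_norm_mul {E : Type*} [NormedAddCommGroup E] {f g : E → ℝ}
    (hf : Continuous f) (hg : Continuous g) (hg₀ : ∀ p, p ≠ 0 → g p ≠ 0)
    (hfg : ∀ p, |f p| ≤ ‖p‖ * |g p|) : Continuous fun p => f p / g p := by
  refine continuous_iff_continuousAt.2 fun p => ?_
  rcases eq_or_ne p 0 with rfl | hp
  · have hle : ∀ q, ‖f q / g q‖ ≤ ‖q‖ := fun q => by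
      rw [Real.norm_eq_abs, abs_div]
      rcases eq_or_ne (g q) 0 with hq | hq
      · simp [hq]
      · exact div_le_of_le_mul₀ (abs_nonneg _) (norm_nonneg _) (hfg q)
    have hf₀ : f 0 / g 0 = 0 := norm_le_zero_iff.1 (by simpa using hle 0)
    rw [ContinuousAt, hf₀]
    exact squeeze_zero_norm hle (by simpa using (continuous_norm (E := E)).tendsto 0)
  · exact hf.continuousAt.div hg.continuousAt (hg₀ p hp)

lemma ite_eq_div_add_sixth_pow (f : ℝ × ℝ → ℝ) (p : ℝ × ℝ) [Decidable (p = 0)] :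
    (if p = 0 then 0 else f p / (p.1 ^ 6 + p.2 ^ 6)) = f p / (p.1 ^ 6 + p.2 ^ 6) := by
  split_ifs with hp <;> simp [hp]

open Classical in
theorem continuous_rational_solution_example :
    Continuous (fun p : ℝ × ℝ =>
      if p = 0 then 0 else p.1 ^ 5 * p.2 ^ 2 / (p.1 ^ 6 + p.2 ^ 6)) ∧
    Continuous (fun p : ℝ × ℝ =>
      if p = 0 then 0 else p.1 ^ 2 * p.2 ^ 5 / (p.1 ^ 6 + p.2 ^ 6)) ∧
    ∀ p : ℝ × ℝ, p.1 ^ 2 * p.2 ^ 2 =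
      (if p = 0 then 0 else p.1 ^ 5 * p.2 ^ 2 / (p.1 ^ 6 + p.2 ^ 6)) * p.1 ^ 3 +
      (if p = 0 then 0 else p.1 ^ 2 * p.2 ^ 5 / (p.1 ^ 6 + p.2 ^ 6)) * p.2 ^ 3 := by
  simp only [ite_eq_div_add_sixth_pow (fun p : ℝ × ℝ => p.1 ^ 5 * p.2 ^ 2),
    ite_eq_div_add_sixth_pow (fun p : ℝ × ℝ => p.1 ^ 2 * p.2 ^ 5)]
  have hD : ∀ p : ℝ × ℝ, p ≠ 0 → p.1 ^ 6 + p.2 ^ 6 ≠ 0 := fun p hp => (add_sixth_pow_pos hp).ne'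
  refine ⟨?_, ?_, fun p => ?_⟩
  · refine continuous_div_of_abs_le_norm_mul (by fun_prop) (by fun_prop) hD fun p => ?_
    rw [abs_of_nonneg (by positivity : 0 ≤ p.1 ^ 6 + p.2 ^ 6)]
    exact (abs_pow_five_mul_sq_le p.1 p.2).trans (by gcongr; exact norm_fst_le p)
  · refine continuous_div_of_abs_le_norm_mul (by fun_prop) (by fun_prop) hD fun p => ?_
    rw [abs_of_nonneg (by positivity : 0 ≤ p.1 ^ 6 + p.2 ^ 6), mul_comm (p.1 ^ 2), add_comm]
    exact (abs_pow_five_mul_sq_le p.2 p.1).trans (by gcongr; exact norm_snd_le p)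
  · rcases eq_or_ne p 0 with rfl | hp
    · simp
    · field_simp [hD p hp]
end

section
/- There do not exist functions ψ₁, ψ₂ : ℝ² → ℝ of class C^∞ such that x²y² = ψ₁(x,y)·x³ + ψ₂(x,y)·y³ for all (x,y) ∈ ℝ². -/
theorem no_smooth_solution :
    ¬ ∃ ψ₁ ψ₂ : ℝ × ℝ → ℝ, ContDiff ℝ (⊤ : ℕ∞) ψ₁ ∧ ContDiff ℝ (⊤ : ℕ∞) ψ₂ ∧
      ∀ p : ℝ × ℝ, p.1 ^ 2 * p.2 ^ 2 = ψ₁ p * p.1 ^ 3 + ψ₂ p * p.2 ^ 3 := by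
  rintro ⟨ψ₁, ψ₂, h₁, h₂, heq⟩
  have hd₁ : Differentiable ℝ ψ₁ := h₁.differentiable (by simp)
  have hd₂ : Differentiable ℝ ψ₂ := h₂.differentiable (by simp)
  -- ψ₁(0,0) = 0 and ψ₂(0,0) = 0
  have hz₁ : ψ₁ (0, 0) = 0 := by
    have hcont : Filter.Tendsto (fun t : ℝ => ψ₁ (t, 0)) (nhdsWithin 0 {0}ᶜ)
        (nhds (ψ₁ (0, 0))) :=
      ((h₁.continuous.comp (continuous_id.prodMk continuous_const)).tendsto 0).mono_left
        nhdsWithin_le_nhds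
    have hval : ∀ t : ℝ, t ≠ 0 → ψ₁ (t, 0) = 0 := by
      intro t ht
      have h := heq (t, 0)
      simp only at h
      have ht3 : t ^ 3 ≠ 0 := pow_ne_zero _ ht
      have : ψ₁ (t, 0) * t ^ 3 = 0 := by nlinarith [h]
      exact (mul_eq_zero.1 this).resolve_right ht3
    have hcont' : Filter.Tendsto (fun t : ℝ => ψ₁ (t, 0)) (nhdsWithin 0 {0}ᶜ)
        (nhds 0) := by
      refine Filter.Tendsto.congr' ?_ tendsto_const_nhds
      filter_upwards [self_mem_nhdsWithin] with t ht
      exact (hval t ht).symm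
    exact tendsto_nhds_unique hcont hcont'
  have hz₂ : ψ₂ (0, 0) = 0 := by
    have hcont : Filter.Tendsto (fun t : ℝ => ψ₂ (0, t)) (nhdsWithin 0 {0}ᶜ)
        (nhds (ψ₂ (0, 0))) :=
      ((h₂.continuous.comp (continuous_const.prodMk continuous_id)).tendsto 0).mono_left
        nhdsWithin_le_nhds
    have hval : ∀ t : ℝ, t ≠ 0 → ψ₂ (0, t) = 0 := by
      intro t ht
      have h := heq (0, t)
      simp only at h
      have ht3 : t ^ 3 ≠ 0 := pow_ne_zero _ ht
      have : ψ₂ (0, t) * t ^ 3 = 0 := by nlinarith [h]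
      exact (mul_eq_zero.1 this).resolve_right ht3
    have hcont' : Filter.Tendsto (fun t : ℝ => ψ₂ (0, t)) (nhdsWithin 0 {0}ᶜ)
        (nhds 0) := by
      refine Filter.Tendsto.congr' ?_ tendsto_const_nhds
      filter_upwards [self_mem_nhdsWithin] with t ht
      exact (hval t ht).symm
    exact tendsto_nhds_unique hcont hcont'
  set D₁ := fderiv ℝ ψ₁ (0, 0) with hD₁
  set D₂ := fderiv ℝ ψ₂ (0, 0) with hD₂
  have key : ∀ l : ℝ, l ^ 2 = D₁ (1, l) + l ^ 3 * D₂ (1, l) := by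
    intro l
    -- the restriction to the line y = l x
    have hgt : ∀ t : ℝ, ψ₁ (t, l * t) + l ^ 3 * ψ₂ (t, l * t) = l ^ 2 * t := by
      intro t
      rcases eq_or_ne t 0 with rfl | ht
      · have h00 : ((0 : ℝ), (0 : ℝ)) = (0 : ℝ × ℝ) := rfl
        rw [h00] at hz₁ hz₂
        simp [h00, hz₁, hz₂]
      · have h := heq (t, l * t)
        simp only at h
        have ht3 : t ^ 3 ≠ 0 := pow_ne_zero _ ht
        have hmul : (ψ₁ (t, l * t) + l ^ 3 * ψ₂ (t, l * t)) * t ^ 3 = l ^ 2 * t * t ^ 3 := by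
          nlinarith [h]
        exact mul_right_cancel₀ ht3 hmul
    have hc : HasDerivAt (fun t : ℝ => ((t, l * t) : ℝ × ℝ)) (1, l) 0 := by
      have hx : HasDerivAt (fun t : ℝ => t) 1 0 := hasDerivAt_id 0
      have hy : HasDerivAt (fun t : ℝ => l * t) l 0 := by
        simpa using (hasDerivAt_id (0 : ℝ)).const_mul l
      exact hx.prodMk hy
    have hF₁ : HasFDerivAt ψ₁ D₁ ((fun t : ℝ => ((t, l * t) : ℝ × ℝ)) 0) := by
      simpa using (hd₁ ((0 : ℝ), (0 : ℝ))).hasFDerivAt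
    have hF₂ : HasFDerivAt ψ₂ D₂ ((fun t : ℝ => ((t, l * t) : ℝ × ℝ)) 0) := by
      simpa using (hd₂ ((0 : ℝ), (0 : ℝ))).hasFDerivAt
    have H1 : HasDerivAt (fun t : ℝ => ψ₁ (t, l * t)) (D₁ (1, l)) 0 :=
      hF₁.comp_hasDerivAt 0 hc
    have H2 : HasDerivAt (fun t : ℝ => ψ₂ (t, l * t)) (D₂ (1, l)) 0 :=
      hF₂.comp_hasDerivAt 0 hc
    have Hg : HasDerivAt (fun t : ℝ => ψ₁ (t, l * t) + l ^ 3 * ψ₂ (t, l * t))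
        (D₁ (1, l) + l ^ 3 * D₂ (1, l)) 0 := H1.add (H2.const_mul (l ^ 3))
    have Hg' : HasDerivAt (fun t : ℝ => l ^ 2 * t) (D₁ (1, l) + l ^ 3 * D₂ (1, l)) 0 := by
      refine Hg.congr_of_eventuallyEq ?_
      filter_upwards with t using (hgt t).symm
    have Hlin : HasDerivAt (fun t : ℝ => l ^ 2 * t) (l ^ 2) 0 := by
      simpa using (hasDerivAt_id (0 : ℝ)).const_mul (l ^ 2)
    exact (Hlin.unique Hg').symm ▸ rfl
  -- expand linearly
  have hsplit : ∀ (D : ℝ × ℝ →L[ℝ] ℝ) (l : ℝ), D (1, l) = D (1, 0) + l * D (0, 1) := by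
    intro D l
    have : ((1 : ℝ), l) = (1, 0) + l • (0, 1) := by simp
    rw [this, map_add, map_smul]
    simp
  have k1 := key 1
  have k2 := key (-1)
  have k3 := key 2
  have k4 := key (-2)
  rw [hsplit D₁ 1, hsplit D₂ 1] at k1
  rw [hsplit D₁ (-1), hsplit D₂ (-1)] at k2
  rw [hsplit D₁ 2, hsplit D₂ 2] at k3
  rw [hsplit D₁ (-2), hsplit D₂ (-2)] at k4
  set a := D₁ (1, 0); set b := D₁ (0, 1); set c := D₂ (1, 0); set d := D₂ (0, 1)
  have k0 := key 0
  norm_num at k0 k1 k2 k3 k4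
  linarith
end

section
/- Let Ω be a metric space, let f₁, …, f_r, φ : Ω → ℝ be continuous, and suppose φ satisfies the pointwise test for f₁, …, f_r. Then for every point p ∈ Ω there is an open neighborhood U of p and a constant M > 0 such that |φ(x)·fᵢ(x)|/(f₁(x)² + ⋯ + f_r(x)²) ≤ M for all x ∈ U with (f₁(x), …, f_r(x)) ≠ 0 and all i. -/
theorem PT_implies_locally_bounded_quotients
    {Ω : Type*} [MetricSpace Ω] (r : ℕ) (f : Fin r → Ω → ℝ) (φ : Ω → ℝ)
    (hf : ∀ i, Continuous (f i)) (hφ : Continuous φ)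
    (hPT : ∀ q : Ω, ∃ ψ : Fin r → Ω → ℝ, (∀ i, ContinuousAt (ψ i) q) ∧
      ∀ x, φ x = ∑ i, ψ i x * f i x) :
    ∀ p : Ω, ∃ U ∈ nhds p, ∃ M : ℝ, 0 < M ∧
      ∀ x ∈ U, (∃ i, f i x ≠ 0) → ∀ i,
        |φ x * f i x| / ∑ j, (f j x) ^ 2 ≤ M := by
  intro p
  obtain ⟨ψ, hψc, hψeq⟩ := hPT p
  set M : ℝ := (∑ j, |ψ j p|) + 1 with hMdef
  have hM0 : 0 < M := by positivity
  have hcont : ContinuousAt (fun x => ∑ j, |ψ j x|) p := by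
    exact tendsto_finset_sum Finset.univ fun j _ => (hψc j).abs
  have hlt : (∑ j, |ψ j p|) < M := by simp [hMdef]
  have hU : ∀ᶠ x in nhds p, (∑ j, |ψ j x|) < M :=
    Filter.Tendsto.eventually_lt_const hlt hcont
  refine ⟨{x | (∑ j, |ψ j x|) < M}, hU, M, hM0, ?_⟩
  intro x hx ⟨i0, hi0⟩ i
  set S : ℝ := ∑ j, (f j x) ^ 2 with hSdef
  have hsq : ∀ j : Fin r, (f j x) ^ 2 ≤ S := fun j =>
    Finset.single_le_sum (fun k _ => sq_nonneg (f k x)) (Finset.mem_univ j)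
  have hS0 : 0 < S := lt_of_lt_of_le (by positivity) (hsq i0)
  rw [div_le_iff₀ hS0]
  have key : |φ x * f i x| ≤ (∑ j, |ψ j x|) * S := by
    rw [hψeq x, Finset.sum_mul]
    calc |∑ j, ψ j x * f j x * f i x| ≤ ∑ j, |ψ j x * f j x * f i x| :=
          Finset.abs_sum_le_sum_abs _ _
      _ ≤ ∑ j, |ψ j x| * S := by
          refine Finset.sum_le_sum fun j _ => ?_
          rw [abs_mul, abs_mul, mul_assoc]
          refine mul_le_mul_of_nonneg_left ?_ (abs_nonneg _)
          nlinarith [sq_abs (f j x), sq_abs (f i x), hsq j, hsq i,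
            sq_nonneg (|f j x| - |f i x|), abs_nonneg (f j x), abs_nonneg (f i x)]
      _ = (∑ j, |ψ j x|) * S := by rw [Finset.sum_mul]
  exact key.trans (mul_le_mul_of_nonneg_right hx.le hS0.le)
end

section
/- Let Ω be a metric space, let f₁, …, f_r, φ : Ω → ℝ be continuous with Z = Z(f₁,…,f_r) nowhere dense, let g, g₁, …, g_r : Ω → ℝ be continuous with fᵢ = g·gᵢ for all i, and suppose φ satisfies the pointwise test for f₁, …, f_r. Then the unique continuous ψ : Ω → ℝ with φ = gψ satisfies the pointwise test for g₁, …, g_r. -/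
open Filter Topology

/-- If `D` is dense, `w` is continuous at `x`, and `w` vanishes on `D`, then `w x = 0`. -/
lemma aux_dense_zero {Ω : Type*} [TopologicalSpace Ω] {D : Set Ω} (hD : Dense D)
    {w : Ω → ℝ} {x : Ω} (hw : ContinuousAt w x) (h0 : ∀ y ∈ D, w y = 0) : w x = 0 := by
  have hne : (nhdsWithin x D).NeBot := mem_closure_iff_nhdsWithin_neBot.mp (hD x)
  have h1 : Tendsto w (nhdsWithin x D) (nhds (w x)) := hw.mono_left nhdsWithin_le_nhds
  have h2 : Tendsto w (nhdsWithin x D) (nhds 0) := by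
    refine Tendsto.congr' ?_ tendsto_const_nhds
    filter_upwards [self_mem_nhdsWithin] with y hy
    exact (h0 y hy).symm
  exact tendsto_nhds_unique h1 h2

theorem quotient_satisfies_PT
    {Ω : Type*} [MetricSpace Ω] (r : ℕ) (f g' : Fin r → Ω → ℝ) (φ g : Ω → ℝ)
    (hf : ∀ i, Continuous (f i)) (hφ : Continuous φ) (hg : Continuous g)
    (hg' : ∀ i, Continuous (g' i))
    (hfac : ∀ i x, f i x = g x * g' i x)
    (hZ : IsNowhereDense {x | ∀ i, f i x = 0})
    (hPT : ∀ p : Ω, ∃ ψ : Fin r → Ω → ℝ, (∀ i, ContinuousAt (ψ i) p) ∧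
      ∀ x, φ x = ∑ i, ψ i x * f i x) :
    ∀ ψ : Ω → ℝ, Continuous ψ → (∀ x, φ x = g x * ψ x) →
      ∀ p : Ω, ∃ χ : Fin r → Ω → ℝ, (∀ i, ContinuousAt (χ i) p) ∧
        ∀ x, ψ x = ∑ i, χ i x * g' i x := by
  intro ψ hψc hψeq p
  set D : Set Ω := {x | g x ≠ 0} with hD
  -- D is dense
  have hDdense : Dense D := by
    have h1 : Dense (closure {x | ∀ i, f i x = 0})ᶜ :=
      interior_eq_empty_iff_dense_compl.mp hZ
    refine h1.mono ?_
    intro x hx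
    simp only [Set.mem_compl_iff] at hx
    intro hgx
    exact hx (subset_closure (fun i => by rw [hfac i x, hgx, zero_mul]))
  -- on D, ψ equals any pointwise-test combination
  have factA : ∀ (θ : Fin r → Ω → ℝ), (∀ x, φ x = ∑ i, θ i x * f i x) →
      ∀ y ∈ D, ψ y = ∑ i, θ i y * g' i y := by
    intro θ hθ y hy
    have key : g y * ψ y = g y * ∑ i, θ i y * g' i y := by
      rw [← hψeq y, hθ y, Finset.mul_sum]
      refine Finset.sum_congr rfl fun i _ => ?_
      rw [hfac i y]; ring
    exact mul_left_cancel₀ hy key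
  -- if all g' i vanish at x, then ψ x = 0
  have factB : ∀ x, (∀ i, g' i x = 0) → ψ x = 0 := by
    intro x hx
    obtain ⟨θ, hθc, hθeq⟩ := hPT x
    have hwc : ContinuousAt (fun y => ψ y - ∑ i, θ i y * g' i y) x := by
      exact (hψc.continuousAt).sub
        (tendsto_finset_sum _ fun i _ => (hθc i).mul (hg' i).continuousAt)
    have hw0 : ∀ y ∈ D, (fun y => ψ y - ∑ i, θ i y * g' i y) y = 0 := by
      intro y hy; simp [factA θ hθeq y hy]
    have := aux_dense_zero hDdense hwc hw0
    simp only [sub_eq_zero] at this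
    rw [this]
    simp [hx]
  obtain ⟨Ψ, hΨc, hΨeq⟩ := hPT p
  set q : Ω → ℝ := fun x => ∑ i, (g' i x) ^ 2 with hq
  set h : Ω → ℝ := fun x => ψ x - ∑ i, Ψ i p * g' i x with hh
  have hqnn : ∀ x, 0 ≤ q x := fun x => Finset.sum_nonneg fun i _ => sq_nonneg _
  have hg'le : ∀ i x, |g' i x| ≤ Real.sqrt (q x) := by
    intro i x
    rw [← Real.sqrt_sq_eq_abs]
    exact Real.sqrt_le_sqrt (Finset.single_le_sum (fun j _ => sq_nonneg (g' j x))
      (Finset.mem_univ i))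
  -- h p = 0
  have hhp : h p = 0 := by
    have hwc : ContinuousAt (fun y => ψ y - ∑ i, Ψ i y * g' i y) p :=
      (hψc.continuousAt).sub
        (tendsto_finset_sum _ fun i _ => (hΨc i).mul (hg' i).continuousAt)
    have hw0 : ∀ y ∈ D, (fun y => ψ y - ∑ i, Ψ i y * g' i y) y = 0 := by
      intro y hy; simp [factA Ψ hΨeq y hy]
    have h2 := aux_dense_zero hDdense hwc hw0
    simpa using h2
  -- continuity of h and q
  have hhcont : Continuous h :=
    hψc.sub (continuous_finset_sum _ fun i _ => continuous_const.mul (hg' i))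
  have hqcont : Continuous q := continuous_finset_sum _ fun i _ => (hg' i).pow 2
  -- the key eventual bound
  have keybound : ∀ ε > (0:ℝ), ∀ᶠ x in nhds p, |h x| ≤ ε * r * Real.sqrt (q x) := by
    intro ε hε
    have hev : ∀ᶠ y in nhds p, ∀ i, |Ψ i y - Ψ i p| ≤ ε := by
      rw [eventually_all]
      intro i
      have := Metric.tendsto_nhds.mp (hΨc i) ε hε
      filter_upwards [this] with y hy
      rw [Real.dist_eq] at hy
      exact hy.le
    set S := {y | ∀ i, |Ψ i y - Ψ i p| ≤ ε} with hS
    have hUnhds : interior S ∈ nhds p := interior_mem_nhds.mpr hev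
    have hC : IsClosed {x | |h x| ≤ ε * r * Real.sqrt (q x)} := by
      refine isClosed_le hhcont.abs ?_
      exact (continuous_const.mul (Real.continuous_sqrt.comp hqcont))
    have hsub : interior S ∩ D ⊆ {x | |h x| ≤ ε * r * Real.sqrt (q x)} := by
      rintro y ⟨hyU, hyD⟩
      have hyS : ∀ i, |Ψ i y - Ψ i p| ≤ ε := interior_subset hyU
      have h1 : h y = ∑ i, (Ψ i y - Ψ i p) * g' i y := by
        simp only [hh, factA Ψ hΨeq y hyD, ← Finset.sum_sub_distrib]
        refine Finset.sum_congr rfl fun i _ => by ring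
      calc |h y| ≤ ∑ i, |(Ψ i y - Ψ i p) * g' i y| := by
            rw [h1]; exact Finset.abs_sum_le_sum_abs _ _
        _ ≤ ∑ _i : Fin r, ε * Real.sqrt (q y) := by
            refine Finset.sum_le_sum fun i _ => ?_
            rw [abs_mul]
            exact mul_le_mul (hyS i) (hg'le i y) (abs_nonneg _)
              hε.le
        _ = ε * r * Real.sqrt (q y) := by
            rw [Finset.sum_const, Finset.card_univ, Fintype.card_fin, nsmul_eq_mul]; ring
    have hfinal : interior S ⊆ {x | |h x| ≤ ε * r * Real.sqrt (q x)} := by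
      have hsub2 : interior S ⊆ closure (interior S ∩ D) :=
        hDdense.open_subset_closure_inter isOpen_interior
      refine subset_trans hsub2 ?_
      rw [← hC.closure_eq]
      exact closure_mono hsub
    exact mem_of_superset hUnhds hfinal
  -- construction of χ
  refine ⟨fun i x => if q x = 0 then Ψ i p else Ψ i p + g' i x * (h x / q x), ?_, ?_⟩
  · intro i
    show ContinuousAt (fun x => if q x = 0 then Ψ i p else Ψ i p + g' i x * (h x / q x)) p
    have hval : (if q p = 0 then Ψ i p else Ψ i p + g' i p * (h p / q p)) = Ψ i p := by
      by_cases hqp : q p = 0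
      · simp [hqp]
      · simp [hqp, hhp]
    show Tendsto _ (nhds p) (nhds (if q p = 0 then Ψ i p else Ψ i p + g' i p * (h p / q p)))
    rw [hval, Metric.tendsto_nhds]
    intro ε hε
    have hε' : (0:ℝ) < ε / (r + 1) := by positivity
    filter_upwards [keybound (ε / (r + 1)) hε'] with x hx
    rw [Real.dist_eq]
    by_cases hqx : q x = 0
    · simpa [hqx] using hε
    · have hqpos : 0 < q x := lt_of_le_of_ne (hqnn x) (Ne.symm hqx)
      have hbound : |g' i x * (h x / q x)| ≤ ε / (r + 1) * r := by
        rw [abs_mul, abs_div, abs_of_pos hqpos]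
        calc |g' i x| * (|h x| / q x)
            ≤ Real.sqrt (q x) * ((ε / (r + 1) * r * Real.sqrt (q x)) / q x) := by
              have : |h x| / q x ≤ (ε / (r + 1) * r * Real.sqrt (q x)) / q x := by
                gcongr
              exact mul_le_mul (hg'le i x) this (by positivity) (Real.sqrt_nonneg _)
          _ = (Real.sqrt (q x) * Real.sqrt (q x)) / q x * (ε / (r + 1) * r) := by ring
          _ = ε / (r + 1) * r := by
              rw [Real.mul_self_sqrt (hqnn x), div_self hqx, one_mul]
      have hlt : ε / (r + 1) * r < ε := by
        rw [div_mul_eq_mul_div, div_lt_iff₀ (by positivity)]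
        nlinarith [hε]
      simp only [if_neg hqx]
      calc |Ψ i p + g' i x * (h x / q x) - Ψ i p| = |g' i x * (h x / q x)| := by ring_nf
        _ ≤ ε / (r + 1) * r := hbound
        _ < ε := hlt
  · intro x
    by_cases hqx : q x = 0
    · have hg0 : ∀ i, g' i x = 0 := by
        intro i
        have := (Finset.sum_eq_zero_iff_of_nonneg (fun j _ => sq_nonneg (g' j x))).mp hqx
          i (Finset.mem_univ i)
        exact (pow_eq_zero_iff two_ne_zero).mp this
      simp [hqx, hg0, factB x hg0]
    · simp only [if_neg hqx]
      have expand : ∑ i, (Ψ i p + g' i x * (h x / q x)) * g' i x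
          = (∑ i, Ψ i p * g' i x) + (h x / q x) * q x := by
        rw [hq, Finset.mul_sum, ← Finset.sum_add_distrib]
        refine Finset.sum_congr rfl fun i _ => by ring
      rw [expand, div_mul_cancel₀ _ hqx, hh]
      ring
end
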